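/- Let h : ℝ → ℝ be twice continuously differentiable, γ₁, γ₂ : ℝ → ℝ locally Lipschitz extended class K∞ functions, and define h′(t) = ḣ(t) + γ₁(h(t)). If h(0) ≥ 0, h′(0) ≥ 0, and ḣ′(t) + γ₂(h′(t)) ≥ 0 for all t ≥ 0, then h(t) ≥ 0 for all t ≥ 0. -/
import Mathlib

/-- Key comparison lemma: if `f` is continuous, `γ` strictly monotone with `γ 0 = 0`,
`f 0 ≥ 0` and `deriv f t + γ (f t) ≥ 0` for all `t ≥ 0`, then `f t ≥ 0` for all `t ≥ 0`. -/
lemma key_cbf (f γ : ℝ → ℝ) (hf : Continuous f) (hγm : StrictMono γ) (hγ0 : γ 0 = 0)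
    (hf0 : 0 ≤ f 0) (hineq : ∀ t, 0 ≤ t → 0 ≤ deriv f t + γ (f t)) :
    ∀ t, 0 ≤ t → 0 ≤ f t := by
  intro t₁ ht₁
  by_contra hneg
  push_neg at hneg
  set S : Set ℝ := Set.Icc 0 t₁ ∩ f ⁻¹' Set.Ici 0 with hS
  have h0S : (0 : ℝ) ∈ S := ⟨⟨le_refl 0, ht₁⟩, hf0⟩
  have hSne : S.Nonempty := ⟨0, h0S⟩
  have hbdd : BddAbove S := ⟨t₁, fun x hx => hx.1.2⟩
  have hSclosed : IsClosed S :=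
    (isClosed_Icc).inter (IsClosed.preimage hf isClosed_Ici)
  set s := sSup S with hs
  have hsS : s ∈ S := hSclosed.csSup_mem hSne hbdd
  have hs0 : 0 ≤ s := hsS.1.1
  have hst : s ≤ t₁ := hsS.1.2
  have hfs : 0 ≤ f s := hsS.2
  have hslt : s < t₁ := lt_of_le_of_ne hst (by intro heq; rw [heq] at hfs; linarith)
  have hmono : StrictMonoOn f (Set.Icc s t₁) := by
    apply strictMonoOn_of_deriv_pos (convex_Icc _ _) hf.continuousOn
    intro x hx
    rw [interior_Icc] at hx
    have hx0 : 0 ≤ x := le_of_lt (lt_of_le_of_lt hs0 hx.1)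
    have hfx : f x < 0 := by
      by_contra hge
      push_neg at hge
      have hxS : x ∈ S := ⟨⟨hx0, hx.2.le⟩, hge⟩
      exact absurd (le_csSup hbdd hxS) (not_le.mpr hx.1)
    have hγx : γ (f x) < 0 := hγ0 ▸ hγm hfx
    linarith [hineq x hx0]
  have := hmono ⟨le_refl s, hst⟩ ⟨hst, le_refl t₁⟩ hslt
  linarith

/-- Recursive (relative degree 2) CBF argument: with h′ = ḣ + γ₁(h), if h(0) ≥ 0,
h′(0) ≥ 0 and ḣ′(t) + γ₂(h′(t)) ≥ 0 for all t ≥ 0, then h(t) ≥ 0 for all t ≥ 0. -/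
theorem stmt_2 (h : ℝ → ℝ) (hh : ContDiff ℝ 2 h)
    (γ₁ γ₂ : ℝ → ℝ)
    (hγ₁c : Continuous γ₁) (hγ₁m : StrictMono γ₁) (hγ₁0 : γ₁ 0 = 0)
    (hγ₁lip : LocallyLipschitz γ₁)
    (hγ₂c : Continuous γ₂) (hγ₂m : StrictMono γ₂) (hγ₂0 : γ₂ 0 = 0)
    (hγ₂lip : LocallyLipschitz γ₂)
    (h' : ℝ → ℝ) (hh' : ∀ t, h' t = deriv h t + γ₁ (h t))
    (h0 : 0 ≤ h 0) (h'0 : 0 ≤ h' 0)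
    (hineq : ∀ t, 0 ≤ t → 0 ≤ deriv h' t + γ₂ (h' t)) :
    ∀ t, 0 ≤ t → 0 ≤ h t := by
  have hderivc : Continuous (deriv h) := hh.continuous_deriv (by norm_num)
  have hh'c : Continuous h' := by
    have heq : h' = fun t => deriv h t + γ₁ (h t) := funext hh'
    rw [heq]
    exact hderivc.add (hγ₁c.comp hh.continuous)
  have step1 : ∀ t, 0 ≤ t → 0 ≤ h' t := key_cbf h' γ₂ hh'c hγ₂m hγ₂0 h'0 hineq
  exact key_cbf h γ₁ hh.continuous hγ₁m hγ₁0 h0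
    (fun t ht => by rw [← hh' t]; exact step1 t ht)
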